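/- arXiv:2311.04555 — 4 statements merged into one kernel-verified Lean document; each statement's English description precedes it below -/
import Mathlib

section
/- For every f ∈ 𝓑 the function f̂ again belongs to 𝓑; that is, for every i ∈ I the function x ↦ f̂(x,i) is well defined (the integrals are finite), continuous on [0,∞), and ‖f̂‖ := max_{i∈I} sup_{x≥0} |f̂(x,i)|/(1+x) is finite. -/
open MeasureTheory Set

noncomputable section

/-- Membership in `𝓑`: `x ↦ f (x, i)` is continuous on `[0,∞)` for every `i ∈ I`, and
`‖f‖ := max_{i∈I} sup_{x ≥ 0} |f (x, i)| / (1 + x)` is finite (formalized as boundedness of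
the corresponding family over `[0,∞) × I`). -/
def memB (I : Type) [Fintype I] (f : ℝ × I → ℝ) : Prop :=
  (∀ i : I, ContinuousOn (fun x : ℝ => f (x, i)) (Set.Ici 0)) ∧
  BddAbove ((fun p : ℝ × I => |f p| / (1 + p.1)) '' (Set.Ici (0 : ℝ) ×ˢ (Set.univ : Set I)))

/-- The function `f̂(x,i) := Σ_{j≠i} (λ_{ij}/λ_i) ∫ [ f(x+y,j)·1_{−y ≤ x}
+ (φ(x+y) + f(0,j))·1_{−y > x} ] F_{ij}(dy)`, where `λ_i = Σ_{j≠i} λ_{ij}` and the measures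
`F_{ij}` are concentrated on `(−∞,0]`. -/
noncomputable def fhat (I : Type) [Fintype I] [DecidableEq I] (φ : ℝ) (lam : I → I → ℝ)
    (F : I → I → Measure ℝ) (f : ℝ × I → ℝ) (x : ℝ) (i : I) : ℝ :=
  ∑ j ∈ Finset.univ.erase i,
    (lam i j / ∑ k ∈ Finset.univ.erase i, lam i k) *
      ∫ y : ℝ, (if -y ≤ x then f (x + y, j) else φ * (x + y) + f (0, j)) ∂(F i j)

/-!
For `x ≥ 0` the integrand of `f̂` is bounded by `C (1 + x) + |f (0, j)| + (C + |φ|) |y|`, where `C`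
is the linear growth constant of `f`: a jump that stays in `[0, ∞)` costs at most `C (1 + x + |y|)`,
and one that overshoots has `|x + y| ≤ |y|`. The first moment of `F i j` makes this bound
integrable, which gives integrability of the integrand, continuity of its integral in `x` by
dominated convergence, and linear growth of the integral. Finite sums with constant coefficients
preserve both continuity and linear growth.
-/

open Filter Topology Asymptotics

def jumpIntegrand (φ : ℝ) (g : ℝ → ℝ) (x y : ℝ) : ℝ :=
  if -y ≤ x then g (x + y) else φ * (x + y) + g 0

lemma isBigO_one_add_iff {g : ℝ → ℝ} :
    g =O[𝓟 (Ici 0)] (fun x => 1 + x) ↔ ∃ C, ∀ x, 0 ≤ x → |g x| ≤ C * (1 + x) := by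
  rw [isBigO_principal]
  refine exists_congr fun C => forall_congr' fun x => ?_
  rw [mem_Ici]
  refine imp_congr_right fun hx => ?_
  rw [Real.norm_eq_abs, Real.norm_eq_abs, abs_of_nonneg (by linarith : (0 : ℝ) ≤ 1 + x)]

lemma memB_iff {I : Type} [Fintype I] (f : ℝ × I → ℝ) :
    memB I f ↔ (∀ i, ContinuousOn (fun x => f (x, i)) (Ici 0)) ∧
      ∀ i, (fun x => f (x, i)) =O[𝓟 (Ici 0)] fun x => 1 + x := by
  simp only [memB, isBigO_one_add_iff]
  refine and_congr_right fun _ => ⟨?_, ?_⟩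
  · rintro ⟨C, hC⟩ i
    refine ⟨C, fun x hx => ?_⟩
    exact (div_le_iff₀ (by linarith)).1 (hC ⟨(x, i), ⟨hx, mem_univ i⟩, rfl⟩)
  · intro h
    choose C hC using h
    obtain ⟨B, hB⟩ := Finite.bddAbove_range C
    refine ⟨B, ?_⟩
    rintro _ ⟨⟨x, i⟩, ⟨hx, -⟩, rfl⟩
    have hx : (0 : ℝ) ≤ x := hx
    rw [div_le_iff₀ (by linarith)]
    calc |f (x, i)| ≤ C i * (1 + x) := hC i x hx
      _ ≤ B * (1 + x) := mul_le_mul_of_nonneg_right (hB (mem_range_self i)) (by linarith)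

section JumpIntegrand

variable {φ : ℝ} {g : ℝ → ℝ}

lemma continuous_jumpIntegrand (hg : ContinuousOn g (Ici 0)) :
    Continuous fun p : ℝ × ℝ => jumpIntegrand φ g p.1 p.2 := by
  have hmax : (fun p : ℝ × ℝ => jumpIntegrand φ g p.1 p.2) = fun p =>
      if -p.2 ≤ p.1 then g (max (p.1 + p.2) 0) else φ * (p.1 + p.2) + g 0 := by
    funext p
    unfold jumpIntegrand
    split_ifs with h
    · rw [max_eq_left (by linarith)]
    · rfl
  rw [hmax]
  refine Continuous.if_le ?_ (by fun_prop) (by fun_prop) (by fun_prop) fun p hp => ?_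
  · exact hg.comp_continuous (by fun_prop) fun p => mem_Ici.2 (le_max_right _ _)
  · rw [show p.1 + p.2 = 0 by linarith]
    simp

lemma abs_jumpIntegrand_le {C x a : ℝ} (hg : ∀ t, 0 ≤ t → |g t| ≤ C * (1 + t))
    (hx : 0 ≤ x) (hxa : x ≤ a) (y : ℝ) :
    |jumpIntegrand φ g x y| ≤ C * (1 + a) + |g 0| + (C + |φ|) * |y| := by
  have hC : 0 ≤ C := by linarith [hg 0 le_rfl, abs_nonneg (g 0)]
  have hφy : 0 ≤ |φ| * |y| := by positivity
  unfold jumpIntegrand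
  split_ifs with h
  · have hstay := hg (x + y) (by linarith)
    have hgrow : C * (1 + (x + y)) ≤ C * (1 + a) + C * |y| := by
      nlinarith [le_abs_self y]
    linarith [abs_nonneg (g 0)]
  · have hover : |x + y| ≤ |y| := by
      rw [abs_of_neg (by linarith), abs_of_neg (by linarith)]
      linarith
    calc |φ * (x + y) + g 0| ≤ |φ| * |x + y| + |g 0| := by
          rw [← abs_mul]; exact abs_add_le _ _
      _ ≤ |φ| * |y| + |g 0| := by gcongr
      _ ≤ _ := by nlinarith [abs_nonneg y, abs_nonneg (g 0)]

variable {μ : Measure ℝ} [IsFiniteMeasure μ]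

lemma integrable_const_add_mul_abs (hμ : Integrable (fun y => |y|) μ) (A B : ℝ) :
    Integrable (fun y => A + B * |y|) μ :=
  (integrable_const A).add (hμ.const_mul B)

lemma integrable_jumpIntegrand (hgc : ContinuousOn g (Ici 0))
    (hg : g =O[𝓟 (Ici 0)] fun x => 1 + x) (hμ : Integrable (fun y => |y|) μ) {x : ℝ}
    (hx : 0 ≤ x) : Integrable (jumpIntegrand φ g x) μ := by
  obtain ⟨C, hC⟩ := isBigO_one_add_iff.1 hg
  exact (integrable_const_add_mul_abs hμ _ _).mono'
    ((continuous_jumpIntegrand hgc).comp (Continuous.prodMk_right x)).aestronglyMeasurable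
    (ae_of_all _ (abs_jumpIntegrand_le hC hx le_rfl))

lemma continuousOn_integral_jumpIntegrand (hgc : ContinuousOn g (Ici 0))
    (hg : g =O[𝓟 (Ici 0)] fun x => 1 + x) (hμ : Integrable (fun y => |y|) μ) :
    ContinuousOn (fun x => ∫ y, jumpIntegrand φ g x y ∂μ) (Ici 0) := by
  obtain ⟨C, hC⟩ := isBigO_one_add_iff.1 hg
  have hcont := continuous_jumpIntegrand (φ := φ) hgc
  intro x₀ _
  have hnear : ∀ᶠ x in 𝓝[Ici 0] x₀, x ∈ Ici 0 ∩ Iio (x₀ + 1) :=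
    inter_mem self_mem_nhdsWithin (mem_nhdsWithin_of_mem_nhds (Iio_mem_nhds (by linarith)))
  refine continuousWithinAt_of_dominated
    (bound := fun y => C * (1 + (x₀ + 1)) + |g 0| + (C + |φ|) * |y|) ?_ ?_ ?_ ?_
  · exact Eventually.of_forall fun x =>
      (hcont.comp (Continuous.prodMk_right x)).aestronglyMeasurable
  · filter_upwards [hnear] with x hx
    exact ae_of_all _ (abs_jumpIntegrand_le hC hx.1 hx.2.le)
  · exact integrable_const_add_mul_abs hμ _ _
  · exact ae_of_all _ fun y =>
      (hcont.comp (Continuous.prodMk_left y)).continuousWithinAt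

lemma isBigO_integral_jumpIntegrand (hg : g =O[𝓟 (Ici 0)] fun x => 1 + x)
    (hμ : Integrable (fun y => |y|) μ) :
    (fun x => ∫ y, jumpIntegrand φ g x y ∂μ) =O[𝓟 (Ici 0)] fun x => 1 + x := by
  obtain ⟨C, hC⟩ := isBigO_one_add_iff.1 hg
  have hC0 : 0 ≤ C := by linarith [hC 0 le_rfl, abs_nonneg (g 0)]
  set m := μ.real univ
  set M := ∫ y, |y| ∂μ
  have hM : 0 ≤ M := integral_nonneg fun y => abs_nonneg y
  refine isBigO_one_add_iff.2 ⟨m * (C + |g 0|) + (C + |φ|) * M, fun x hx => ?_⟩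
  have hbound := norm_integral_le_of_norm_le (f := jumpIntegrand φ g x)
    (integrable_const_add_mul_abs hμ (C * (1 + x) + |g 0|) (C + |φ|))
    (ae_of_all μ (abs_jumpIntegrand_le hC hx le_rfl))
  rw [integral_add (integrable_const _) (hμ.const_mul _), integral_const, integral_const_mul,
    smul_eq_mul] at hbound
  have hm : 0 ≤ m := measureReal_nonneg
  calc |∫ y, jumpIntegrand φ g x y ∂μ|
      ≤ m * (C * (1 + x) + |g 0|) + (C + |φ|) * M := hbound
    _ ≤ (m * (C + |g 0|) + (C + |φ|) * M) * (1 + x) := by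
      nlinarith [mul_nonneg (mul_nonneg hm (abs_nonneg (g 0))) hx,
        mul_nonneg (mul_nonneg (add_nonneg hC0 (abs_nonneg φ)) hM) hx]

end JumpIntegrand

theorem fhat_mem_B_general (I : Type) [Fintype I] [DecidableEq I]
    (φ : ℝ) (lam : I → I → ℝ) (F : I → I → Measure ℝ)
    (hFprob : ∀ i j : I, i ≠ j → IsProbabilityMeasure (F i j))
    (hFmom : ∀ i j : I, i ≠ j → Integrable (fun y : ℝ => |y|) (F i j))
    (f : ℝ × I → ℝ) (hf : memB I f) :
    (∀ i j : I, i ≠ j → ∀ x : ℝ, 0 ≤ x →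
      Integrable (fun y : ℝ => if -y ≤ x then f (x + y, j) else φ * (x + y) + f (0, j))
        (F i j)) ∧
    memB I (fun p : ℝ × I => fhat I φ lam F f p.1 p.2) := by
  obtain ⟨hfc, hfO⟩ := (memB_iff f).1 hf
  refine ⟨fun i j hij x hx => ?_, (memB_iff _).2 ⟨fun i => ?_, fun i => ?_⟩⟩
  · have := hFprob i j hij
    exact integrable_jumpIntegrand (hfc j) (hfO j) (hFmom i j hij) hx
  · simp only [fhat]
    refine continuousOn_finsetSum _ fun j hj => continuousOn_const.mul ?_
    have hij := (Finset.ne_of_mem_erase hj).symm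
    have := hFprob i j hij
    exact continuousOn_integral_jumpIntegrand (hfc j) (hfO j) (hFmom i j hij)
  · simp only [fhat]
    refine IsBigO.fun_sum fun j hj => IsBigO.const_mul_left ?_ _
    have hij := (Finset.ne_of_mem_erase hj).symm
    have := hFprob i j hij
    exact isBigO_integral_jumpIntegrand (hfO j) (hFmom i j hij)

/-- For every `f ∈ 𝓑`, the function `f̂` again belongs to `𝓑`: for every `i ∈ I` the function
`x ↦ f̂(x,i)` is well defined (the integrals are finite), continuous on `[0,∞)`, and
`‖f̂‖ := max_{i∈I} sup_{x≥0} |f̂(x,i)|/(1+x)` is finite. -/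
theorem fhat_mem_B (I : Type) [Fintype I] [Nonempty I] [DecidableEq I]
    (φ : ℝ) (hφ : 1 < φ)
    (lam : I → I → ℝ) (hlam : ∀ i j : I, i ≠ j → 0 ≤ lam i j)
    (hlampos : ∀ i : I, 0 < ∑ k ∈ Finset.univ.erase i, lam i k)
    (F : I → I → Measure ℝ)
    (hFprob : ∀ i j : I, i ≠ j → IsProbabilityMeasure (F i j))
    (hFsupp : ∀ i j : I, i ≠ j → F i j (Set.Ioi 0) = 0)
    (hFmom : ∀ i j : I, i ≠ j → Integrable (fun y : ℝ => |y|) (F i j))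
    (f : ℝ × I → ℝ) (hf : memB I f) :
    (∀ i j : I, i ≠ j → ∀ x : ℝ, 0 ≤ x →
      Integrable (fun y : ℝ => if -y ≤ x then f (x + y, j) else φ * (x + y) + f (0, j))
        (F i j)) ∧
    memB I (fun p : ℝ × I => fhat I φ lam F f p.1 p.2) :=
  fhat_mem_B_general I φ lam F hFprob hFmom f hf
end
end

section
/- Suppose f ∈ 𝓑 is such that for every j ∈ I the function x ↦ f(x,j) is concave on [0,∞), nondecreasing, continuously differentiable on (0,∞), its right derivative at 0 is at most φ, and the limit L_j := lim_{x→∞} ∂f/∂x (x,j) exists and lies in [0,1]. Then for every i ∈ I the function x ↦ f̂(x,i) is concave on [0,∞), its right derivative at 0 is at most φ, and the limit as x → ∞ of its right derivative exists and lies in [0,1]. -/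
/-!
Continue each payoff `u = f(·, j)` affinely with slope `φ` to the left of `0`; then `f̂(·, i)` is
a convex combination of the averages `x ↦ ∫ G(x + y) dF_{ij}(y)` of translates of the
continuation `G`. Since `u'(0+) ≤ φ`, `G` is concave on all of `ℝ`, and being monotone with
slopes in `[0, φ]` it is `φ`-Lipschitz. Averaging translates preserves concavity, and dominated
convergence (slopes bounded by `φ`, the first moment of `F_{ij}` for integrability) allows one to
differentiate under the integral from the right and to pass to the limit `x → ∞`, where the right
derivative of `G` is `u'`. The bounds `≤ φ` and `∈ [0, 1]` survive convex combinations.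
-/

open MeasureTheory Set Filter

noncomputable section

open scoped NNReal Topology

section TranslatedIntegral

variable {μ : Measure ℝ} {g : ℝ → ℝ} {K : ℝ≥0}

theorem LipschitzWith.abs_slope_le (hg : LipschitzWith K g) (a b : ℝ) : |slope g a b| ≤ K := by
  rcases eq_or_ne a b with rfl | hab
  · simp
  rw [slope_def_field, abs_div, div_le_iff₀ (abs_pos.2 (sub_ne_zero.2 hab.symm))]
  simpa only [Real.dist_eq] using hg.dist_le_mul b a

theorem LipschitzWith.abs_derivWithin_Ici_le (hg : LipschitzWith K g) {x : ℝ}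
    (hgx : DifferentiableWithinAt ℝ g (Ici x) x) : |derivWithin g (Ici x) x| ≤ K := by
  have h := hasDerivWithinAt_iff_tendsto_slope.1 hgx.hasDerivWithinAt
  rw [Ici_sdiff_left] at h
  exact le_of_tendsto (continuous_abs.continuousAt.tendsto.comp h)
    (Eventually.of_forall fun t => hg.abs_slope_le x t)

theorem LipschitzWith.integrable_comp_add [IsFiniteMeasure μ] (hg : LipschitzWith K g)
    (hμ : Integrable (fun y => |y|) μ) (x : ℝ) : Integrable (fun y => g (x + y)) μ := by
  refine Integrable.mono' (g := fun y => |g x| + K * |y|)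
    ((integrable_const _).add (hμ.const_mul K))
    (hg.continuous.comp (continuous_const_add x)).aestronglyMeasurable
    (Eventually.of_forall fun y => ?_)
  have := hg.dist_le_mul (x + y) x
  rw [Real.dist_eq, Real.dist_eq, add_sub_cancel_left] at this
  rw [Real.norm_eq_abs]
  linarith [abs_sub_abs_le_abs_sub (g (x + y)) (g x)]

theorem ConcaveOn.integral_comp_add (hg : ConcaveOn ℝ univ g)
    (hint : ∀ x, Integrable (fun y => g (x + y)) μ) :
    ConcaveOn ℝ univ fun x => ∫ y, g (x + y) ∂μ := by
  refine ⟨convex_univ, fun x _ z _ a b ha hb hab => ?_⟩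
  have hpt : ∀ y, a • g (x + y) + b • g (z + y) ≤ g ((a • x + b • z) + y) := fun y => by
    have := hg.2 (mem_univ (x + y)) (mem_univ (z + y)) ha hb hab
    rwa [show a • (x + y) + b • (z + y) = (a • x + b • z) + y by
      simp only [smul_eq_mul]; linear_combination y * hab] at this
  simp only [smul_eq_mul] at hpt ⊢
  calc a * ∫ y, g (x + y) ∂μ + b * ∫ y, g (z + y) ∂μ
      = ∫ y, (a * g (x + y) + b * g (z + y)) ∂μ := by
        rw [integral_add ((hint x).const_mul a) ((hint z).const_mul b), integral_const_mul,
          integral_const_mul]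
    _ ≤ ∫ y, g ((a * x + b * z) + y) ∂μ :=
        integral_mono (((hint x).const_mul a).add ((hint z).const_mul b)) (hint _) hpt

theorem LipschitzWith.hasDerivWithinAt_integral_comp_add [IsFiniteMeasure μ]
    (hg : LipschitzWith K g) (hμ : Integrable (fun y => |y|) μ)
    (hdiff : ∀ t, DifferentiableWithinAt ℝ g (Ici t) t) (x : ℝ) :
    HasDerivWithinAt (fun x => ∫ y, g (x + y) ∂μ)
      (∫ y, derivWithin g (Ici (x + y)) (x + y) ∂μ) (Ici x) x := by
  rw [hasDerivWithinAt_iff_tendsto_slope, Ici_sdiff_left]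
  have hslope : ∀ t, slope (fun x => ∫ y, g (x + y) ∂μ) x t
      = ∫ y, slope g (x + y) (t + y) ∂μ := fun t => by
    simp only [slope_def_field, add_sub_add_right_eq_sub]
    rw [integral_div, integral_sub (hg.integrable_comp_add hμ t) (hg.integrable_comp_add hμ x)]
  refine (tendsto_congr hslope).2 <|
    tendsto_integral_filter_of_dominated_convergence (fun _ => (K : ℝ))
      (Eventually.of_forall fun t => ?_) (Eventually.of_forall fun t => ?_)
      (integrable_const _) (Eventually.of_forall fun y => ?_)
  · have := hg.continuous
    simp only [slope_def_field, add_sub_add_right_eq_sub]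
    fun_prop
  · exact Eventually.of_forall fun y => hg.abs_slope_le _ _
  · have h := hasDerivWithinAt_iff_tendsto_slope.1 (hdiff (x + y)).hasDerivWithinAt
    rw [Ici_sdiff_left] at h
    refine h.comp (tendsto_nhdsWithin_of_tendsto_nhds_of_eventually_within _ ?_ ?_)
    · exact ((continuous_add_const y).tendsto x).mono_left nhdsWithin_le_nhds
    · filter_upwards [self_mem_nhdsWithin] with t ht using add_lt_add_left ht y

theorem tendsto_integral_comp_add_atTop [IsProbabilityMeasure μ] {h : ℝ → ℝ} {C L : ℝ}
    (hmeas : Measurable h) (hbound : ∀ t, |h t| ≤ C) (hL : Tendsto h atTop (𝓝 L)) :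
    Tendsto (fun x => ∫ y, h (x + y) ∂μ) atTop (𝓝 L) := by
  have : ∫ _, L ∂μ = L := by simp
  rw [← this]
  refine tendsto_integral_filter_of_dominated_convergence (fun _ => C)
    (Eventually.of_forall fun x => (hmeas.comp (measurable_const_add x)).aestronglyMeasurable)
    (Eventually.of_forall fun x => Eventually.of_forall fun y => hbound (x + y))
    (integrable_const _) (Eventually.of_forall fun y => ?_)
  exact hL.comp (tendsto_atTop_add_const_right _ y tendsto_id)

end TranslatedIntegral

/-- The integrand of `fhat`, evaluated at `x + y`. -/
def extendAffineLeft (φ : ℝ) (u : ℝ → ℝ) (t : ℝ) : ℝ :=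
  if 0 ≤ t then u t else φ * t + u 0

section ExtendAffineLeft

variable {φ d t : ℝ} {u : ℝ → ℝ}

theorem extendAffineLeft_of_nonneg (ht : 0 ≤ t) : extendAffineLeft φ u t = u t := if_pos ht

theorem extendAffineLeft_of_nonpos (ht : t ≤ 0) : extendAffineLeft φ u t = φ * t + u 0 := by
  rcases ht.lt_or_eq with ht | rfl
  · exact if_neg ht.not_ge
  · simp [extendAffineLeft]

theorem extendAffineLeft_le (hcv : ConcaveOn ℝ (Ici 0) u) (hd : HasDerivWithinAt u d (Ici 0) 0)
    (hdφ : d ≤ φ) (t : ℝ) : extendAffineLeft φ u t ≤ φ * t + u 0 := by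
  rcases le_or_gt t 0 with ht | ht
  · exact (extendAffineLeft_of_nonpos ht).le
  have hslope := hcv.slope_le_of_hasDerivWithinAt self_mem_Ici ht.le ht hd
  rw [slope_def_field, sub_zero, div_le_iff₀ ht] at hslope
  rw [extendAffineLeft_of_nonneg ht.le]
  nlinarith

theorem concaveOn_extendAffineLeft (hcv : ConcaveOn ℝ (Ici 0) u)
    (hd : HasDerivWithinAt u d (Ici 0) 0) (hdφ : d ≤ φ) :
    ConcaveOn ℝ univ (extendAffineLeft φ u) := by
  have hle := extendAffineLeft_le hcv hd hdφ
  refine concaveOn_of_slope_anti_adjacent convex_univ fun {x y z} _ _ hxy hyz => ?_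
  rcases le_or_gt y 0 with hy | hy
  · rw [extendAffineLeft_of_nonpos hy, extendAffineLeft_of_nonpos (hxy.le.trans hy),
      div_le_div_iff₀ (by linarith) (by linarith)]
    nlinarith [hle z]
  rcases lt_or_ge x 0 with hx | hx
  · have h0 := hcv.slope_anti_adjacent self_mem_Ici (hy.le.trans hyz.le) hy hyz
    rw [extendAffineLeft_of_nonneg (hy.trans hyz).le, extendAffineLeft_of_nonneg hy.le,
      extendAffineLeft_of_nonpos hx.le]
    refine h0.trans ?_
    have hy' := hle y
    rw [extendAffineLeft_of_nonneg hy.le] at hy'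
    rw [div_le_div_iff₀ (by linarith) (by linarith)]
    nlinarith
  · rw [extendAffineLeft_of_nonneg (hx.trans (hxy.trans hyz).le), extendAffineLeft_of_nonneg hy.le,
      extendAffineLeft_of_nonneg hx]
    exact hcv.slope_anti_adjacent hx (hx.trans (hxy.trans hyz).le) hxy hyz

theorem monotone_extendAffineLeft (hm : MonotoneOn u (Ici 0)) (hφ : 0 ≤ φ) :
    Monotone (extendAffineLeft φ u) := by
  intro s t hst
  rcases le_or_gt 0 s with hs | hs
  · rw [extendAffineLeft_of_nonneg hs, extendAffineLeft_of_nonneg (hs.trans hst)]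
    exact hm hs (hs.trans hst) hst
  rw [extendAffineLeft_of_nonpos hs.le]
  rcases le_or_gt t 0 with ht | ht
  · rw [extendAffineLeft_of_nonpos ht]
    nlinarith
  · rw [extendAffineLeft_of_nonneg ht.le]
    nlinarith [hm self_mem_Ici ht.le ht.le]

theorem lipschitzWith_extendAffineLeft (hm : MonotoneOn u (Ici 0))
    (hcv : ConcaveOn ℝ (Ici 0) u) (hd : HasDerivWithinAt u d (Ici 0) 0) (hdφ : d ≤ φ)
    (hφ : 0 ≤ φ) : LipschitzWith (Real.toNNReal φ) (extendAffineLeft φ u) := by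
  refine LipschitzWith.of_le_add_mul' φ fun s t => ?_
  rcases le_or_gt s t with hst | hts
  · have hmono := monotone_extendAffineLeft hm hφ hst
    have hnonneg : 0 ≤ φ * dist s t := by positivity
    linarith
  -- compare the slope on `[t, s]` with the slope `φ` on a segment `[a, t]` reaching below `0`
  set a := min t 0 - 1
  have hat : a < t := by linarith [min_le_left t 0]
  have hslope := (concaveOn_extendAffineLeft hcv hd hdφ).slope_anti_adjacent
    (mem_univ a) (mem_univ s) hat hts
  have hta := extendAffineLeft_le hcv hd hdφ t
  rw [extendAffineLeft_of_nonpos (by linarith [min_le_right t 0] : a ≤ 0),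
    div_le_div_iff₀ (by linarith) (by linarith)] at hslope
  rw [Real.dist_eq, abs_of_pos (sub_pos.2 hts)]
  nlinarith

theorem hasDerivAt_extendAffineLeft_of_neg (ht : t < 0) :
    HasDerivAt (extendAffineLeft φ u) φ t := by
  have hlin : HasDerivAt (fun s => φ * s + u 0) φ t := by
    simpa using ((hasDerivAt_id t).const_mul φ).add_const (u 0)
  refine hlin.congr_of_eventuallyEq ?_
  filter_upwards [Iio_mem_nhds ht] with s hs using extendAffineLeft_of_nonpos hs.le

theorem extendAffineLeft_eventuallyEq_of_pos (ht : 0 < t) :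
    extendAffineLeft φ u =ᶠ[𝓝 t] u := by
  filter_upwards [Ioi_mem_nhds ht] with s hs using extendAffineLeft_of_nonneg hs.le

theorem differentiableWithinAt_extendAffineLeft (hdiff : DifferentiableOn ℝ u (Ioi 0))
    (hd : HasDerivWithinAt u d (Ici 0) 0) (t : ℝ) :
    DifferentiableWithinAt ℝ (extendAffineLeft φ u) (Ici t) t := by
  rcases lt_trichotomy t 0 with ht | rfl | ht
  · exact (hasDerivAt_extendAffineLeft_of_neg ht).differentiableAt.differentiableWithinAt
  · exact (hd.congr (fun s hs => extendAffineLeft_of_nonneg hs)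
      (extendAffineLeft_of_nonneg le_rfl)).differentiableWithinAt
  · have hu := (hdiff t ht).differentiableAt (Ioi_mem_nhds ht)
    exact (hu.congr_of_eventuallyEq
      (extendAffineLeft_eventuallyEq_of_pos ht)).differentiableWithinAt

theorem derivWithin_extendAffineLeft_of_pos (ht : 0 < t) (hu : DifferentiableAt ℝ u t) :
    derivWithin (extendAffineLeft φ u) (Ici t) t = deriv u t :=
  ((hu.hasDerivAt.congr_of_eventuallyEq (extendAffineLeft_eventuallyEq_of_pos ht)).hasDerivWithinAt
    ).derivWithin (uniqueDiffWithinAt_Ici t)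

end ExtendAffineLeft

structure ConcaveRightDerivLimit (φ L : ℝ) (g : ℝ → ℝ) : Prop where
  concaveOn : ConcaveOn ℝ univ g
  differentiableWithinAt_Ici : ∀ x, DifferentiableWithinAt ℝ g (Ici x) x
  derivWithin_zero_le : derivWithin g (Ici 0) 0 ≤ φ
  tendsto_derivWithin : Tendsto (fun x => derivWithin g (Ici x) x) atTop (𝓝 L)

theorem concaveOn_finset_sum {ι : Type*} {s : Finset ι} {S : Set ℝ} (hS : Convex ℝ S)
    {g : ι → ℝ → ℝ} (hg : ∀ j ∈ s, ConcaveOn ℝ S (g j)) :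
    ConcaveOn ℝ S fun x => ∑ j ∈ s, g j x := by
  classical
  induction s using Finset.induction_on with
  | empty => simpa using concaveOn_const (0 : ℝ) hS
  | insert a s ha ih =>
    simp only [Finset.sum_insert ha]
    exact (hg a (s.mem_insert_self a)).add (ih fun j hj => hg j (Finset.mem_insert_of_mem hj))

theorem ConcaveRightDerivLimit.finset_sum {ι : Type*} {s : Finset ι} {c : ι → ℝ}
    {φ : ℝ} {L : ι → ℝ} {g : ι → ℝ → ℝ} (hc0 : ∀ j ∈ s, 0 ≤ c j) (hc1 : ∑ j ∈ s, c j = 1)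
    (hg : ∀ j ∈ s, ConcaveRightDerivLimit φ (L j) (g j)) :
    ConcaveRightDerivLimit φ (∑ j ∈ s, c j * L j) fun x => ∑ j ∈ s, c j * g j x := by
  have hderiv : ∀ x, HasDerivWithinAt (fun x => ∑ j ∈ s, c j * g j x)
      (∑ j ∈ s, c j * derivWithin (g j) (Ici x) x) (Ici x) x := fun x =>
    HasDerivWithinAt.fun_sum fun j hj =>
      ((hg j hj).differentiableWithinAt_Ici x).hasDerivWithinAt.const_mul (c j)
  have hderivWithin : ∀ x, derivWithin (fun x => ∑ j ∈ s, c j * g j x) (Ici x) x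
      = ∑ j ∈ s, c j * derivWithin (g j) (Ici x) x := fun x =>
    (hderiv x).derivWithin (uniqueDiffWithinAt_Ici x)
  refine ⟨concaveOn_finset_sum convex_univ fun j hj => ?_,
    fun x => (hderiv x).differentiableWithinAt, ?_, ?_⟩
  · simpa only [smul_eq_mul] using (hg j hj).concaveOn.smul (hc0 j hj)
  · rw [hderivWithin]
    simpa only [smul_eq_mul, mem_Iic] using (convex_Iic φ).sum_mem hc0 hc1 fun j hj =>
      (hg j hj).derivWithin_zero_le
  · simp only [hderivWithin]
    exact tendsto_finsetSum _ fun j hj => (hg j hj).tendsto_derivWithin.const_mul (c j)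

theorem concaveRightDerivLimit_integral_extendAffineLeft {μ : Measure ℝ} [IsProbabilityMeasure μ]
    {φ d L : ℝ} {u : ℝ → ℝ} (hμ : Integrable (fun y => |y|) μ) (hcv : ConcaveOn ℝ (Ici 0) u)
    (hm : MonotoneOn u (Ici 0)) (hdiff : DifferentiableOn ℝ u (Ioi 0))
    (hd : HasDerivWithinAt u d (Ici 0) 0) (hdφ : d ≤ φ) (hL : Tendsto (deriv u) atTop (𝓝 L)) :
    ConcaveRightDerivLimit φ L fun x => ∫ y, extendAffineLeft φ u (x + y) ∂μ := by
  set G := extendAffineLeft φ u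
  have hφ : 0 ≤ φ :=
    ((hd.derivWithin (uniqueDiffWithinAt_Ici 0)) ▸ hm.derivWithin_nonneg).trans hdφ
  have hG : LipschitzWith (Real.toNNReal φ) G := lipschitzWith_extendAffineLeft hm hcv hd hdφ hφ
  have hGdiff : ∀ t, DifferentiableWithinAt ℝ G (Ici t) t :=
    differentiableWithinAt_extendAffineLeft hdiff hd
  have hG' : ∀ t, |derivWithin G (Ici t) t| ≤ φ := fun t => by
    simpa [Real.coe_toNNReal φ hφ] using hG.abs_derivWithin_Ici_le (hGdiff t)
  have hderiv := hG.hasDerivWithinAt_integral_comp_add hμ hGdiff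
  have hderivWithin : ∀ x, derivWithin (fun x => ∫ y, G (x + y) ∂μ) (Ici x) x
      = ∫ y, derivWithin G (Ici (x + y)) (x + y) ∂μ := fun x =>
    (hderiv x).derivWithin (uniqueDiffWithinAt_Ici x)
  refine ⟨(concaveOn_extendAffineLeft hcv hd hdφ).integral_comp_add (hG.integrable_comp_add hμ),
    fun x => (hderiv x).differentiableWithinAt, ?_, ?_⟩
  · rw [hderivWithin]
    refine (le_abs_self _).trans ?_
    simpa using norm_integral_le_of_norm_le_const (μ := μ)
      (Eventually.of_forall fun y => (Real.norm_eq_abs _).trans_le (hG' (0 + y)))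
  · simp only [hderivWithin]
    refine tendsto_integral_comp_add_atTop (measurable_derivWithin_Ici G) hG' (hL.congr' ?_)
    filter_upwards [eventually_gt_atTop 0] with t ht
    exact (derivWithin_extendAffineLeft_of_pos ht ((hdiff t ht).differentiableAt
      (Ioi_mem_nhds ht))).symm

theorem fhat_eq_sum_integral_extendAffineLeft (I : Type) [Fintype I] [DecidableEq I] (φ : ℝ)
    (lam : I → I → ℝ) (F : I → I → Measure ℝ) (f : ℝ × I → ℝ) (i : I) :
    (fun x => fhat I φ lam F f x i) = fun x => ∑ j ∈ Finset.univ.erase i,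
      (lam i j / ∑ k ∈ Finset.univ.erase i, lam i k) *
        ∫ y, extendAffineLeft φ (fun t => f (t, j)) (x + y) ∂F i j := by
  funext x
  simp only [fhat, extendAffineLeft, neg_le_iff_add_nonneg]

theorem fhat_payoff_general (I : Type) [Fintype I] [DecidableEq I]
    (φ : ℝ)
    (lam : I → I → ℝ) (hlam : ∀ i j : I, i ≠ j → 0 ≤ lam i j)
    (hlampos : ∀ i : I, 0 < ∑ k ∈ Finset.univ.erase i, lam i k)
    (F : I → I → Measure ℝ)
    (hFprob : ∀ i j : I, i ≠ j → IsProbabilityMeasure (F i j))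
    (hFmom : ∀ i j : I, i ≠ j → Integrable (fun y : ℝ => |y|) (F i j))
    (f : ℝ × I → ℝ)
    (hconc : ∀ j : I, ConcaveOn ℝ (Set.Ici 0) fun x : ℝ => f (x, j))
    (hmono : ∀ j : I, MonotoneOn (fun x : ℝ => f (x, j)) (Set.Ici 0))
    (hC1 : ∀ j : I, ContDiffOn ℝ 1 (fun x : ℝ => f (x, j)) (Set.Ioi 0))
    (hd0 : ∀ j : I, ∃ d : ℝ, d ≤ φ ∧
      HasDerivWithinAt (fun x : ℝ => f (x, j)) d (Set.Ici 0) 0)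
    (L : I → ℝ) (hLmem : ∀ j : I, L j ∈ Set.Icc (0 : ℝ) 1)
    (hLlim : ∀ j : I,
      Tendsto (fun x : ℝ => deriv (fun t : ℝ => f (t, j)) x) atTop (nhds (L j))) :
    ∀ i : I,
      ConcaveOn ℝ (Set.Ici 0) (fun x : ℝ => fhat I φ lam F f x i) ∧
      (∃ d : ℝ, d ≤ φ ∧
        HasDerivWithinAt (fun x : ℝ => fhat I φ lam F f x i) d (Set.Ici 0) 0) ∧
      (∃ M : ℝ, M ∈ Set.Icc (0 : ℝ) 1 ∧
        (∀ x : ℝ, 0 < x →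
          DifferentiableWithinAt ℝ (fun t : ℝ => fhat I φ lam F f t i) (Set.Ici x) x) ∧
        Tendsto (fun x : ℝ => derivWithin (fun t : ℝ => fhat I φ lam F f t i) (Set.Ici x) x)
          atTop (nhds M)) := by
  intro i
  choose d hdφ hd using hd0
  have hc0 : ∀ j ∈ Finset.univ.erase i, 0 ≤ lam i j / ∑ k ∈ Finset.univ.erase i, lam i k :=
    fun j hj => div_nonneg (hlam i j (Finset.ne_of_mem_erase hj).symm) (hlampos i).le
  have hc1 : ∑ j ∈ Finset.univ.erase i, lam i j / ∑ k ∈ Finset.univ.erase i, lam i k = 1 := by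
    rw [← Finset.sum_div, div_self (hlampos i).ne']
  have hfhat := ConcaveRightDerivLimit.finset_sum (L := L) hc0 hc1 fun j hj => by
    have hij := (Finset.ne_of_mem_erase hj).symm
    have := hFprob i j hij
    exact concaveRightDerivLimit_integral_extendAffineLeft (hFmom i j hij) (hconc j) (hmono j)
      ((hC1 j).differentiableOn one_ne_zero) (hd j) (hdφ j) (hLlim j)
  rw [← fhat_eq_sum_integral_extendAffineLeft] at hfhat
  refine ⟨hfhat.concaveOn.subset (subset_univ _) (convex_Ici 0),
    ⟨_, hfhat.derivWithin_zero_le, (hfhat.differentiableWithinAt_Ici 0).hasDerivWithinAt⟩,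
    _, ?_, fun x _ => hfhat.differentiableWithinAt_Ici x, hfhat.tendsto_derivWithin⟩
  simpa only [smul_eq_mul] using (convex_Icc 0 1).sum_mem hc0 hc1 fun j _ => hLmem j

/-- If `f ∈ 𝓑` is such that for every `j` the function `x ↦ f(x,j)` is concave on `[0,∞)`,
nondecreasing, continuously differentiable on `(0,∞)`, has right derivative at `0` at most `φ`,
and its derivative tends to a limit `L j ∈ [0,1]` as `x → ∞`, then for every `i` the function
`x ↦ f̂(x,i)` is concave on `[0,∞)`, has right derivative at `0` at most `φ`, and its right
derivative tends, as `x → ∞`, to a limit lying in `[0,1]`. -/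
theorem fhat_payoff (I : Type) [Fintype I] [Nonempty I] [DecidableEq I]
    (φ : ℝ) (hφ : 1 < φ)
    (lam : I → I → ℝ) (hlam : ∀ i j : I, i ≠ j → 0 ≤ lam i j)
    (hlampos : ∀ i : I, 0 < ∑ k ∈ Finset.univ.erase i, lam i k)
    (F : I → I → Measure ℝ)
    (hFprob : ∀ i j : I, i ≠ j → IsProbabilityMeasure (F i j))
    (hFsupp : ∀ i j : I, i ≠ j → F i j (Set.Ioi 0) = 0)
    (hFmom : ∀ i j : I, i ≠ j → Integrable (fun y : ℝ => |y|) (F i j))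
    (f : ℝ × I → ℝ) (hf : memB I f)
    (hconc : ∀ j : I, ConcaveOn ℝ (Set.Ici 0) fun x : ℝ => f (x, j))
    (hmono : ∀ j : I, MonotoneOn (fun x : ℝ => f (x, j)) (Set.Ici 0))
    (hC1 : ∀ j : I, ContDiffOn ℝ 1 (fun x : ℝ => f (x, j)) (Set.Ioi 0))
    (hd0 : ∀ j : I, ∃ d : ℝ, d ≤ φ ∧
      HasDerivWithinAt (fun x : ℝ => f (x, j)) d (Set.Ici 0) 0)
    (L : I → ℝ) (hLmem : ∀ j : I, L j ∈ Set.Icc (0 : ℝ) 1)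
    (hLlim : ∀ j : I,
      Tendsto (fun x : ℝ => deriv (fun t : ℝ => f (t, j)) x) atTop (nhds (L j))) :
    ∀ i : I,
      ConcaveOn ℝ (Set.Ici 0) (fun x : ℝ => fhat I φ lam F f x i) ∧
      (∃ d : ℝ, d ≤ φ ∧
        HasDerivWithinAt (fun x : ℝ => fhat I φ lam F f x i) d (Set.Ici 0) 0) ∧
      (∃ M : ℝ, M ∈ Set.Icc (0 : ℝ) 1 ∧
        (∀ x : ℝ, 0 < x →
          DifferentiableWithinAt ℝ (fun t : ℝ => fhat I φ lam F f t i) (Set.Ici x) x) ∧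
        Tendsto (fun x : ℝ => derivWithin (fun t : ℝ => fhat I φ lam F f t i) (Set.Ici x) x)
          atTop (nhds M)) :=
  fhat_payoff_general I φ lam hlam hlampos F hFprob hFmom f hconc hmono hC1 hd0 L hLmem hLlim
end
end

section
/- Let μ be a Borel probability measure on ℝ and let F : ℝ → ℝ be concave with ∫ |F(x+y)| μ(dy) < ∞ for every x ∈ ℝ, and suppose there is φ ∈ ℝ such that F(z') − F(z) ≤ φ·(z'−z) whenever z ≤ z'. Then the function g(x) := ∫ F(x+y) μ(dy) has a finite right derivative at every x ∈ ℝ, given by g'_+(x) = ∫ F'_+(x+y) μ(dy), where F'_+ denotes the (everywhere finite) right derivative of the concave function F; in particular g'_+(x) ≤ φ for every x. -/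
/-!
For concave `F` the difference quotient `(F (z + h) - F z) / h` is nonincreasing in `h`, so for
`0 < h ≤ 1` it lies between `F (z + 1) - F z` and `φ`. At `z = x + y` both bounds are
`μ`-integrable in `y`, and dominated convergence passes the right difference quotients of
`g x = ∫ F (x + y) dμ(y)` under the integral.
-/

open MeasureTheory Set Filter Topology

section Slope

variable {E : Type*} [NormedAddCommGroup E] [NormedSpace ℝ E] {f : ℝ → E} {f' : E} {x a : ℝ}

theorem hasDerivWithinAt_Ici_iff_tendsto_slope :
    HasDerivWithinAt f f' (Ici x) x ↔ Tendsto (slope f x) (𝓝[>] x) (𝓝 f') := by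
  rw [← hasDerivWithinAt_Ioi_iff_Ici,
    hasDerivWithinAt_iff_tendsto_slope' (s := Ioi x) (lt_irrefl x)]

theorem slope_comp_add_const (f : ℝ → E) (a b c : ℝ) :
    slope (fun x ↦ f (x + a)) b c = slope f (b + a) (c + a) := by
  simp only [slope_def_module, add_sub_add_right_eq_sub]

theorem HasDerivWithinAt.comp_add_const_Ici (hf : HasDerivWithinAt f f' (Ici (x + a)) (x + a)) :
    HasDerivWithinAt (fun y ↦ f (y + a)) f' (Ici x) x := by
  have h_maps : MapsTo (· + a) (Ici x) (Ici (x + a)) := fun y hy ↦ by simpa using hy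
  simpa only [Function.comp_def, one_smul] using
    hf.scomp x ((hasDerivAt_id' x).add_const a).hasDerivWithinAt h_maps

end Slope

section ParametricIntegral

variable {α E : Type*} [MeasurableSpace α] {μ : Measure α} [NormedAddCommGroup E]
  [NormedSpace ℝ E] {f : ℝ → α → E} {f' : α → E} {x₀ ε : ℝ} {bound : α → ℝ}

theorem hasDerivWithinAt_Ici_integral_of_dominated_slope (hε : 0 < ε)
    (hf_int : ∀ x ∈ Icc x₀ (x₀ + ε), Integrable (f x) μ)
    (hf'_meas : AEStronglyMeasurable f' μ)
    (h_slope : ∀ᵐ a ∂μ, ∀ x ∈ Ioc x₀ (x₀ + ε), ‖slope (f · a) x₀ x‖ ≤ bound a)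
    (bound_integrable : Integrable bound μ)
    (h_diff : ∀ᵐ a ∂μ, HasDerivWithinAt (f · a) (f' a) (Ici x₀) x₀) :
    Integrable f' μ ∧
      HasDerivWithinAt (fun x ↦ ∫ a, f x a ∂μ) (∫ a, f' a ∂μ) (Ici x₀) x₀ := by
  have h_mem₀ : x₀ ∈ Icc x₀ (x₀ + ε) := left_mem_Icc.2 (by linarith)
  have h_near : Ioc x₀ (x₀ + ε) ∈ 𝓝[>] x₀ := Ioc_mem_nhdsGT (by linarith)
  have h_lim : ∀ᵐ a ∂μ, Tendsto (slope (f · a) x₀) (𝓝[>] x₀) (𝓝 (f' a)) :=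
    h_diff.mono fun a ha ↦ hasDerivWithinAt_Ici_iff_tendsto_slope.1 ha
  have h_slope_int : ∀ x ∈ Ioc x₀ (x₀ + ε), Integrable (fun a ↦ slope (f · a) x₀ x) μ :=
    fun x hx ↦ by
      simp only [slope_def_module]
      exact ((hf_int x (Ioc_subset_Icc_self hx)).sub (hf_int x₀ h_mem₀)).smul (x - x₀)⁻¹
  have hf'_bound : ∀ᵐ a ∂μ, ‖f' a‖ ≤ bound a := by
    filter_upwards [h_lim, h_slope] with a ha ha_bound
    exact le_of_tendsto ha.norm (eventually_of_mem h_near ha_bound)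
  have h_lim_integral : Tendsto (fun x ↦ ∫ a, slope (f · a) x₀ x ∂μ) (𝓝[>] x₀)
      (𝓝 (∫ a, f' a ∂μ)) :=
    tendsto_integral_filter_of_dominated_convergence bound
      (eventually_of_mem h_near fun x hx ↦ (h_slope_int x hx).aestronglyMeasurable)
      (eventually_of_mem h_near fun x hx ↦ h_slope.mono fun a ha ↦ ha x hx)
      bound_integrable h_lim
  refine ⟨bound_integrable.mono' hf'_meas hf'_bound,
    hasDerivWithinAt_Ici_iff_tendsto_slope.2 (h_lim_integral.congr' ?_)⟩
  filter_upwards [h_near] with x hx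
  simp only [slope_def_module]
  rw [integral_smul, integral_sub (hf_int x (Ioc_subset_Icc_self hx)) (hf_int x₀ h_mem₀)]

end ParametricIntegral

namespace ConcaveOn

variable {S : Set ℝ} {f : ℝ → ℝ} {x y z c : ℝ}

theorem hasDerivWithinAt_derivWithin_Ici (hf : ConcaveOn ℝ S f) (hx : x ∈ interior S) :
    HasDerivWithinAt f (derivWithin f (Ici x) x) (Ici x) x := by
  have h := (hf.neg.differentiableWithinAt_Ioi_of_mem_interior hx).neg
  rw [neg_neg] at h
  exact (differentiableWithinAt_Ioi_iff_Ici.1 h).hasDerivWithinAt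

theorem abs_slope_le_max (hf : ConcaveOn ℝ S f) (hx : x ∈ S) (hy : y ∈ S) (hz : z ∈ S)
    (hxy : x < y) (hyz : y ≤ z) (hc : slope f x y ≤ c) : |slope f x y| ≤ max |slope f x z| |c| :=
  abs_le_max_abs_abs (hf.antitoneOn_slope_gt hx ⟨hy, hxy⟩ ⟨hz, hxy.trans_le hyz⟩ hyz) hc

end ConcaveOn

/-- Let `μ` be a Borel probability measure on `ℝ` and `F : ℝ → ℝ` concave with
`y ↦ F (x + y)` `μ`-integrable for every `x`, and suppose `F z' − F z ≤ φ·(z' − z)` for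
`z ≤ z'`.  Then `g(x) := ∫ F (x + y) μ(dy)` has a finite right derivative at every `x`, given
by `g'_+(x) = ∫ F'_+(x + y) μ(dy)` (with `F'_+` the right derivative of `F`, formalized as
`derivWithin F (Ici z) z`); in particular `g'_+(x) ≤ φ` for every `x`. -/
theorem right_deriv_of_integral_concave (μ : Measure ℝ) [IsProbabilityMeasure μ]
    (F : ℝ → ℝ) (hF : ConcaveOn ℝ Set.univ F)
    (hint : ∀ x : ℝ, Integrable (fun y : ℝ => F (x + y)) μ)
    (φ : ℝ) (hφ : ∀ z z' : ℝ, z ≤ z' → F z' - F z ≤ φ * (z' - z)) :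
    ∀ x : ℝ,
      Integrable (fun y : ℝ => derivWithin F (Set.Ici (x + y)) (x + y)) μ ∧
      HasDerivWithinAt (fun x : ℝ => ∫ y : ℝ, F (x + y) ∂μ)
        (∫ y : ℝ, derivWithin F (Set.Ici (x + y)) (x + y) ∂μ) (Set.Ici x) x ∧
      (∫ y : ℝ, derivWithin F (Set.Ici (x + y)) (x + y) ∂μ) ≤ φ := by
  have h_slope : ∀ z w, z < w → slope F z w ≤ φ := fun z w hzw ↦ by
    rw [slope_def_field, div_le_iff₀ (sub_pos.2 hzw)]
    exact hφ z w hzw.le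
  have hD : ∀ z, HasDerivWithinAt F (derivWithin F (Ici z) z) (Ici z) z :=
    fun z ↦ hF.hasDerivWithinAt_derivWithin_Ici (by simp)
  have hD_le : ∀ z, derivWithin F (Ici z) z ≤ φ := fun z ↦
    le_of_tendsto (hasDerivWithinAt_Ici_iff_tendsto_slope.1 (hD z))
      (eventually_nhdsWithin_of_forall fun w hw ↦ h_slope z w hw)
  intro x
  have h_dom : ∀ y, ∀ z ∈ Ioc x (x + 1),
      ‖slope (fun z ↦ F (z + y)) x z‖ ≤ max |F (x + 1 + y) - F (x + y)| |φ| := by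
    intro y z hz
    have h_unit : slope F (x + y) (x + 1 + y) = F (x + 1 + y) - F (x + y) := by
      simp [slope_def_field]
    have hxz : x + y < z + y := by linarith [hz.1]
    rw [slope_comp_add_const, Real.norm_eq_abs, ← h_unit]
    exact hF.abs_slope_le_max trivial trivial trivial hxz (by linarith [hz.2]) (h_slope _ _ hxz)
  obtain ⟨h_int, h_deriv⟩ := hasDerivWithinAt_Ici_integral_of_dominated_slope
    (f := fun z y ↦ F (z + y)) one_pos (fun z _ ↦ hint z)
    ((measurable_derivWithin_Ici F).comp (measurable_const_add x)).aestronglyMeasurable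
    (ae_of_all _ h_dom) (((hint (x + 1)).sub (hint x)).abs.sup (integrable_const |φ|))
    (ae_of_all _ fun y ↦ (hD (x + y)).comp_add_const_Ici)
  refine ⟨h_int, h_deriv, ?_⟩
  calc ∫ y, derivWithin F (Ici (x + y)) (x + y) ∂μ ≤ ∫ _, φ ∂μ :=
        integral_mono h_int (integrable_const φ) fun y ↦ hD_le (x + y)
    _ = φ := by simp
end

section
/- Let p, q ∈ ℝ and let W_p, W_q : ℝ → ℝ be Borel measurable functions that vanish on (−∞,0), are continuous on [0,∞), and satisfy the resolvent identity W_q(u) = W_p(u) + (q − p) ∫_0^u W_p(u−z) W_q(z) dz for every u ≥ 0. Then for every x ≥ 0 and every y ∈ ℝ with x + y ≥ 0, one has W_q(x+y) − (q − p) ∫_0^x W_q(z+y) W_p(x−z) dz = W_p(x+y) + (q − p) ∫_0^y W_p(x+y−z) W_q(z) dz, where for y < 0 the last integral is the (signed) interval integral from 0 to y, which vanishes since W_q is zero on (−∞,0). -/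
/-! Apply the resolvent identity at `x + y` and split its convolution integral at `y`: after the
substitution `z ↦ z + y`, the piece over `[y, x + y]` is the integral on the left-hand side.
When `y < 0` the split still makes sense because the integrand vanishes on `[y, 0)`. -/

open MeasureTheory Set

section VanishingOnNegatives

variable {E : Type*} [NormedAddCommGroup E] {f : ℝ → E}

theorem intervalIntegrable_of_eq_zero_of_neg (hf : ∀ u < 0, f u = 0) {a : ℝ} (ha : a ≤ 0) :
    IntervalIntegrable f volume a 0 := by
  rw [intervalIntegrable_iff_integrableOn_Ioo_of_le ha]
  exact integrableOn_zero.congr_fun (fun u hu => (hf u hu.2).symm) measurableSet_Ioo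

theorem intervalIntegrable_zero_of_eq_zero_of_neg_of_continuousOn (hf : ∀ u < 0, f u = 0)
    {a b : ℝ} (hfc : ContinuousOn f (Icc 0 b)) (hab : a ≤ b) :
    IntervalIntegrable f volume 0 a := by
  rcases le_or_gt 0 a with ha | ha
  · refine (hfc.mono ?_).intervalIntegrable
    rw [uIcc_of_le ha]
    exact Icc_subset_Icc_right hab
  · exact (intervalIntegrable_of_eq_zero_of_neg hf ha.le).symm

end VanishingOnNegatives

theorem scale_function_identity_general (p q : ℝ) (Wp Wq : ℝ → ℝ)
    (hWq0 : ∀ u : ℝ, u < 0 → Wq u = 0)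
    (hWpc : ContinuousOn Wp (Set.Ici 0)) (hWqc : ContinuousOn Wq (Set.Ici 0))
    (hres : ∀ u : ℝ, 0 ≤ u →
      Wq u = Wp u + (q - p) * ∫ z in (0:ℝ)..u, Wp (u - z) * Wq z) :
    ∀ x : ℝ, 0 ≤ x → ∀ y : ℝ, 0 ≤ x + y →
      Wq (x + y) - (q - p) * ∫ z in (0:ℝ)..x, Wq (z + y) * Wp (x - z) =
      Wp (x + y) + (q - p) * ∫ z in (0:ℝ)..y, Wp (x + y - z) * Wq z := by
  intro x _ y hxy
  set g : ℝ → ℝ := fun z => Wp (x + y - z) * Wq z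
  have hg0 : ∀ z < 0, g z = 0 := fun z hz => by simp [g, hWq0 z hz]
  have hgc : ContinuousOn g (Icc 0 (x + y)) :=
    (hWpc.comp (by fun_prop) fun z hz => sub_nonneg.2 hz.2).mul (hWqc.mono Icc_subset_Ici_self)
  have hint : ∀ a ≤ x + y, IntervalIntegrable g volume 0 a := fun a ha =>
    intervalIntegrable_zero_of_eq_zero_of_neg_of_continuousOn hg0 hgc ha
  have hy : IntervalIntegrable g volume 0 y := hint y (by linarith)
  have hsplit : ∫ z in (0:ℝ)..(x + y), g z = (∫ z in (0:ℝ)..y, g z) + ∫ z in y..(x + y), g z :=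
    (intervalIntegral.integral_add_adjacent_intervals hy (hy.symm.trans (hint _ le_rfl))).symm
  have hshift : ∫ z in (0:ℝ)..x, Wq (z + y) * Wp (x - z) = ∫ z in y..(x + y), g z :=
    calc ∫ z in (0:ℝ)..x, Wq (z + y) * Wp (x - z) = ∫ z in (0:ℝ)..x, g (z + y) := by
          congr 1 with z
          simp only [g]
          ring_nf
      _ = ∫ z in y..(x + y), g z := by
          rw [intervalIntegral.integral_comp_add_right, zero_add]
  rw [hshift, hres _ hxy, hsplit]
  ring

/-- Let `p, q ∈ ℝ` and `W_p, W_q : ℝ → ℝ` be Borel measurable functions vanishing on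
`(−∞,0)`, continuous on `[0,∞)`, and satisfying the resolvent identity
`W_q(u) = W_p(u) + (q − p) ∫_0^u W_p(u − z) W_q(z) dz` for every `u ≥ 0`.  Then for every
`x ≥ 0` and `y ∈ ℝ` with `x + y ≥ 0`,
`W_q(x+y) − (q − p) ∫_0^x W_q(z+y) W_p(x−z) dz
  = W_p(x+y) + (q − p) ∫_0^y W_p(x+y−z) W_q(z) dz`,
where `∫_0^y` is the signed interval integral (which vanishes for `y < 0` since `W_q` is zero
on `(−∞,0)`). -/
theorem scale_function_identity (p q : ℝ) (Wp Wq : ℝ → ℝ)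
    (hWpm : Measurable Wp) (hWqm : Measurable Wq)
    (hWp0 : ∀ u : ℝ, u < 0 → Wp u = 0) (hWq0 : ∀ u : ℝ, u < 0 → Wq u = 0)
    (hWpc : ContinuousOn Wp (Set.Ici 0)) (hWqc : ContinuousOn Wq (Set.Ici 0))
    (hres : ∀ u : ℝ, 0 ≤ u →
      Wq u = Wp u + (q - p) * ∫ z in (0:ℝ)..u, Wp (u - z) * Wq z) :
    ∀ x : ℝ, 0 ≤ x → ∀ y : ℝ, 0 ≤ x + y →
      Wq (x + y) - (q - p) * ∫ z in (0:ℝ)..x, Wq (z + y) * Wp (x - z) =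
      Wp (x + y) + (q - p) * ∫ z in (0:ℝ)..y, Wp (x + y - z) * Wq z :=
  scale_function_identity_general p q Wp Wq hWq0 hWpc hWqc hres
end
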